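/- arXiv:math/0703485 — 2 statements merged into one kernel-verified Lean document; each statement's English description precedes it below -/
import Mathlib

section
/- Let ℓ be an odd prime and a, b, D, c3, c4 integers with gcd(c3, c4) = 1, a² − b²·D > 0, and suppose c3²·a + c4²·a·D + 2·c3·c4·b·D ≡ 0 (mod ℓ) and c3²·b + c4²·b·D + 2·c3·c4·a ≡ 0 (mod ℓ). Then ℓ ≤ max{a, D, a² − b²·D}. -/
/-!
In `ℤ[√D]` the two expressions are the coordinates of `(c3 + c4√D)² (a + b√D)`. Multiplying by
the conjugate `a - b√D` gives `(c3 + c4√D)² (a² - b²D)`, whose `√D`-coordinate `2 c3 c4 (a² - b²D)`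
is therefore divisible by `ℓ`. As `ℓ` is odd it divides `c3`, `c4` or `a² - b²D`; coprimality
and the first congruence push the first two cases down to `ℓ ∣ a` or `ℓ ∣ D`. A positive multiple
of `ℓ` is at least `ℓ`.
-/

section CommRing

variable {R : Type*} [CommRing R]

theorem Odd.isUnit_of_dvd_two {p : R} (hodd : Odd p) (h : p ∣ 2) : IsUnit p := by
  obtain ⟨k, rfl⟩ := hodd
  exact isUnit_of_dvd_one ((dvd_add_right (h.mul_right k)).mp dvd_rfl)

theorem dvd_two_mul_mul_mul_norm {p a b D c3 c4 : R}
    (h1 : p ∣ c3 ^ 2 * a + c4 ^ 2 * a * D + 2 * c3 * c4 * b * D)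
    (h2 : p ∣ c3 ^ 2 * b + c4 ^ 2 * b * D + 2 * c3 * c4 * a) :
    p ∣ 2 * c3 * c4 * (a ^ 2 - b ^ 2 * D) := by
  have h := (h2.mul_left a).sub (h1.mul_left b)
  convert h using 1
  ring

theorem Prime.dvd_or_dvd_or_dvd_norm {p a b D c3 c4 : R} (hp : Prime p) (hodd : Odd p)
    (hcop : IsCoprime c3 c4)
    (h1 : p ∣ c3 ^ 2 * a + c4 ^ 2 * a * D + 2 * c3 * c4 * b * D)
    (h2 : p ∣ c3 ^ 2 * b + c4 ^ 2 * b * D + 2 * c3 * c4 * a) :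
    p ∣ a ∨ p ∣ D ∨ p ∣ a ^ 2 - b ^ 2 * D := by
  have not_both (h3 : p ∣ c3) (h4 : p ∣ c4) : False := hp.not_isUnit (hcop.isUnit_of_dvd' h3 h4)
  rcases hp.dvd_or_dvd (dvd_two_mul_mul_mul_norm h1 h2) with h | h
  · rcases hp.dvd_or_dvd h with h | h4
    · rcases hp.dvd_or_dvd h with h2 | h3
      · exact (hp.not_isUnit (hodd.isUnit_of_dvd_two h2)).elim
      · have : p ∣ c4 ^ 2 * a * D := by
          have h := h1.sub (h3.mul_right (c3 * a + 2 * c4 * b * D))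
          convert h using 1
          ring
        rcases hp.dvd_or_dvd this with h | hD
        · rcases hp.dvd_or_dvd h with h4 | ha
          · exact (not_both h3 (hp.dvd_of_dvd_pow h4)).elim
          · exact .inl ha
        · exact .inr (.inl hD)
    · have : p ∣ c3 ^ 2 * a := by
        have h := h1.sub (h4.mul_right (c4 * a * D + 2 * c3 * b * D))
        convert h using 1
        ring
      rcases hp.dvd_or_dvd this with h3 | ha
      · exact (not_both (hp.dvd_of_dvd_pow h3) h4).elim
      · exact .inl ha
  · exact .inr (.inr h)

end CommRing

theorem stmt_3 (ℓ a b D c3 c4 : ℤ) (hℓ : Prime ℓ) (hodd : Odd ℓ)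
    (hgcd : Int.gcd c3 c4 = 1)
    (ha : 0 < a) (hD : 0 < D) (hpos : 0 < a ^ 2 - b ^ 2 * D)
    (h1 : c3 ^ 2 * a + c4 ^ 2 * a * D + 2 * c3 * c4 * b * D ≡ 0 [ZMOD ℓ])
    (h2 : c3 ^ 2 * b + c4 ^ 2 * b * D + 2 * c3 * c4 * a ≡ 0 [ZMOD ℓ]) :
    ℓ ≤ max a (max D (a ^ 2 - b ^ 2 * D)) := by
  rcases hℓ.dvd_or_dvd_or_dvd_norm hodd (Int.isCoprime_iff_gcd_eq_one.mpr hgcd)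
      (Int.modEq_zero_iff_dvd.mp h1) (Int.modEq_zero_iff_dvd.mp h2) with h | h | h
  · exact (Int.le_of_dvd ha h).trans (le_max_left _ _)
  · exact (Int.le_of_dvd hD h).trans ((le_max_left _ _).trans (le_max_right _ _))
  · exact (Int.le_of_dvd hpos h).trans ((le_max_right _ _).trans (le_max_right _ _))
end

section
/- Let ℓ be an odd prime and a, b, D integers, and suppose c3, c4 are integers such that ℓ ∤ c3 or ℓ ∤ c4 (i.e., c3 ≡ 0 (mod ℓ) and c4 ≡ 0 (mod ℓ) do not both hold). If c3²·a + c4²·a·D + 2·c3·c4·b·D ≡ 0 (mod ℓ), c3²·b + c4²·b·D + 2·c3·c4·a ≡ 0 (mod ℓ), ℓ > a > 0, ℓ > D > 0, and ℓ > a² − b²·D > 0, then a contradiction follows (i.e., no such c3, c4 exist). -/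
theorem stmt_15 (ℓ a b D c3 c4 : ℤ) (hℓ : Prime ℓ) (hodd : Odd ℓ)
    (hnot : ¬ (c3 ≡ 0 [ZMOD ℓ] ∧ c4 ≡ 0 [ZMOD ℓ]))
    (h1 : c3 ^ 2 * a + c4 ^ 2 * a * D + 2 * c3 * c4 * b * D ≡ 0 [ZMOD ℓ])
    (h2 : c3 ^ 2 * b + c4 ^ 2 * b * D + 2 * c3 * c4 * a ≡ 0 [ZMOD ℓ])
    (ha : 0 < a) (haℓ : a < ℓ) (hD : 0 < D) (hDℓ : D < ℓ)
    (hab : 0 < a ^ 2 - b ^ 2 * D) (habℓ : a ^ 2 - b ^ 2 * D < ℓ) :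
    False := by
  have hd1 : ℓ ∣ c3 ^ 2 * a + c4 ^ 2 * a * D + 2 * c3 * c4 * b * D :=
    (Int.modEq_zero_iff_dvd).mp h1
  have hd2 : ℓ ∣ c3 ^ 2 * b + c4 ^ 2 * b * D + 2 * c3 * c4 * a :=
    (Int.modEq_zero_iff_dvd).mp h2
  have hnℓa : ¬ ℓ ∣ a := fun h => absurd (Int.le_of_dvd ha h) (not_le.mpr haℓ)
  have hnℓD : ¬ ℓ ∣ D := fun h => absurd (Int.le_of_dvd hD h) (not_le.mpr hDℓ)
  have hnℓab : ¬ ℓ ∣ (a ^ 2 - b ^ 2 * D) :=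
    fun h => absurd (Int.le_of_dvd hab h) (not_le.mpr habℓ)
  have hnℓ2 : ¬ ℓ ∣ 2 := by
    intro h
    have h2 : ℓ ≤ 2 := Int.le_of_dvd (by norm_num) h
    obtain ⟨k, hk⟩ := hodd
    omega
  have key : ℓ ∣ 2 * (c3 * (c4 * (a ^ 2 - b ^ 2 * D))) := by
    have := dvd_sub (hd2.mul_right a) (hd1.mul_right b)
    convert this using 2
    rfl
    ring
  have hc34 : ℓ ∣ c3 ∨ ℓ ∣ c4 := by
    have hx := (hℓ.dvd_mul.mp key).resolve_left hnℓ2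
    rcases hℓ.dvd_mul.mp hx with hx | hx
    · exact Or.inl hx
    rcases hℓ.dvd_mul.mp hx with hy | hy
    · exact Or.inr hy
    · exact absurd hy hnℓab
  have dvdsq : ∀ x : ℤ, ℓ ∣ x ^ 2 → ℓ ∣ x := by
    intro x hx
    rw [sq] at hx
    exact (hℓ.dvd_mul.mp hx).elim id id
  have hboth : ℓ ∣ c3 ∧ ℓ ∣ c4 := by
    rcases hc34 with h | h
    · refine ⟨h, ?_⟩
      have : ℓ ∣ c4 ^ 2 * a * D := by
        have h' : ℓ ∣ c3 ^ 2 * a + 2 * c3 * c4 * b * D :=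
          dvd_add ((dvd_pow h two_ne_zero).mul_right a)
            ((((h.mul_left 2).mul_right c4).mul_right b).mul_right D)
        have := dvd_sub hd1 h'
        convert this using 2; rfl; ring
      rcases hℓ.dvd_mul.mp this with h2' | h2'
      · rcases hℓ.dvd_mul.mp h2' with h3 | h3
        · exact dvdsq _ h3
        · exact absurd h3 hnℓa
      · exact absurd h2' hnℓD
    · refine ⟨?_, h⟩
      have : ℓ ∣ c3 ^ 2 * a := by
        have h' : ℓ ∣ c4 ^ 2 * a * D + 2 * c3 * c4 * b * D :=
          dvd_add (((dvd_pow h two_ne_zero).mul_right a).mul_right D)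
            (((h.mul_left (2 * c3)).mul_right b).mul_right D)
        have := dvd_sub hd1 h'
        convert this using 2; rfl; ring
      rcases hℓ.dvd_mul.mp this with h3 | h3
      · exact dvdsq _ h3
      · exact absurd h3 hnℓa
  exact hnot ⟨(Int.modEq_zero_iff_dvd).mpr hboth.1, (Int.modEq_zero_iff_dvd).mpr hboth.2⟩
end
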